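/- arXiv:math/0003025 — 3 statements merged into one kernel-verified Lean document; each statement's English description precedes it below -/
import Mathlib

section
/- Let p be a prime, d ≥ 1, and let f be a polynomial in d variables with coefficients in ℤ_p. For every real number s > 0, Igusa's local zeta function of f satisfies ∫_{ℤ_p^d} |f(x)|_p^s dμ(x) = Σ_{n=0}^∞ card(X_{n,f}) · p^{-((n+1)d + n s)}, where the sum on the right-hand side converges. -/
open MeasureTheory MvPolynomial

/-- `Y_{n,f}`: the set of `x ∈ ℤ_p^d` with `|f(x)|_p = p^{-n}`. -/
def Yset (p : ℕ) [Fact p.Prime] {d : ℕ} (f : MvPolynomial (Fin d) ℤ_[p]) (n : ℕ) :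
    Set (Fin d → ℤ_[p]) :=
  {x | ‖MvPolynomial.eval x f‖ = (p : ℝ) ^ (-(n : ℤ))}

/-- `X_{n,f}`: the image of `Y_{n,f}` under coordinatewise reduction mod `p^{n+1}`. -/
def Xset (p : ℕ) [Fact p.Prime] {d : ℕ} (f : MvPolynomial (Fin d) ℤ_[p]) (n : ℕ) :
    Set (Fin d → ZMod (p ^ (n + 1))) :=
  (fun (x : Fin d → ℤ_[p]) (i : Fin d) => PadicInt.toZModPow (n + 1) (x i)) '' Yset p f n

/-!
Because `f` has coefficients in `ℤ_p`, the residue of `f(x)` modulo `p^{n+1}` depends only on the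
residue of `x`, and that residue already decides whether `f(x)` has valuation exactly `n`. Hence
`Y_{n,f}` is the full preimage of `X_{n,f}` under reduction modulo `p^{n+1}`. By translation
invariance the `p^{(n+1)d}` residue classes all have the same measure, so
`μ(Y_{n,f}) = card(X_{n,f}) · p^{-(n+1)d}`, while the integrand is the constant `p^{-ns}` on
`Y_{n,f}`. The sets `Y_{n,f}` partition the complement of the zero set of `f`, on which the
integrand vanishes because `s > 0`, and countable additivity of the integral gives the series.
-/

section FiniteQuotient

variable {G H : Type*} [AddGroup G] [MeasurableSpace G] [MeasurableAdd G] [AddGroup H]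
  (μ : Measure G) [μ.IsAddLeftInvariant] {π : G →+ H}

theorem measure_preimage_singleton_eq_of_surjective (hπ : Function.Surjective π) (a b : H) :
    μ (π ⁻¹' {a}) = μ (π ⁻¹' {b}) := by
  obtain ⟨g, hg⟩ := hπ (a - b)
  rw [← measure_preimage_add μ g (π ⁻¹' {a})]
  congr 1
  ext x
  simp only [Set.mem_preimage, Set.mem_singleton_iff, map_add, hg]
  rw [← eq_neg_add_iff_add_eq, neg_sub, sub_add_cancel]

theorem measure_preimage_eq_ncard_mul_div [Finite H] (hπ : Function.Surjective π)
    (hmeas : ∀ b, MeasurableSet (π ⁻¹' {b})) (S : Set H) :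
    μ (π ⁻¹' S) = S.ncard * μ Set.univ / Nat.card H := by
  have hS : ∀ T : Set H, μ (π ⁻¹' T) = T.ncard * μ (π ⁻¹' {0}) := fun T => by
    rw [← T.toFinite.coe_toFinset, ← sum_measure_preimage_singleton _ fun b _ => hmeas b,
      Finset.sum_congr rfl fun b _ => measure_preimage_singleton_eq_of_surjective μ hπ b 0,
      Finset.sum_const, nsmul_eq_mul, Set.ncard_coe_finset]
  have hcard : (Nat.card H : ENNReal) ≠ 0 := Nat.cast_ne_zero.mpr Nat.card_pos.ne'
  rw [hS S, ← Set.preimage_univ (f := π), hS Set.univ, Set.ncard_univ,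
    mul_comm (Nat.card H : ENNReal), ← mul_assoc,
    ENNReal.mul_div_cancel_right hcard (ENNReal.natCast_ne_top _)]

end FiniteQuotient

namespace PadicInt

variable {p : ℕ} [Fact p.Prime]

theorem toZModPow_eq_toZModPow_iff (k : ℕ) (a b : ℤ_[p]) :
    toZModPow k a = toZModPow k b ↔ ‖a - b‖ ≤ (p : ℝ) ^ (-(k : ℤ)) := by
  rw [← sub_eq_zero, ← map_sub, ← RingHom.mem_ker, ker_toZModPow, norm_le_pow_iff_mem_span_pow]

theorem toZModPow_surjective (k : ℕ) : Function.Surjective (toZModPow k : ℤ_[p] →+* ZMod (p ^ k)) :=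
  fun c => ⟨c.val, by rw [map_natCast, ZMod.natCast_zmod_val]⟩

theorem continuous_toZModPow (k : ℕ) : Continuous (toZModPow k : ℤ_[p] → ZMod (p ^ k)) := by
  refine continuous_discrete_rng.mpr fun c => ?_
  obtain ⟨a, rfl⟩ := toZModPow_surjective k c
  have hfiber : toZModPow k ⁻¹' {toZModPow k a} = Metric.closedBall a ((p : ℝ) ^ (-(k : ℤ))) := by
    ext x
    simp [toZModPow_eq_toZModPow_iff, dist_eq_norm]
  rw [hfiber]
  exact IsUltrametricDist.isOpen_closedBall a (zpow_ne_zero _ (Nat.cast_ne_zero.mpr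
    (Fact.out : p.Prime).ne_zero))

theorem norm_eq_of_toZModPow_eq {n k : ℕ} (hnk : n < k) {a b : ℤ_[p]}
    (hab : toZModPow k a = toZModPow k b) (ha : ‖a‖ = (p : ℝ) ^ (-(n : ℤ))) :
    ‖b‖ = (p : ℝ) ^ (-(n : ℤ)) := by
  have hlt : ‖b + -a‖ < ‖-a‖ :=
    calc ‖b + -a‖ ≤ (p : ℝ) ^ (-(k : ℤ)) :=
          (toZModPow_eq_toZModPow_iff k b a).mp hab.symm |>.trans_eq' (by rw [sub_eq_add_neg])
      _ < (p : ℝ) ^ (-(n : ℤ)) :=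
          zpow_lt_zpow_right₀ (by exact_mod_cast (Fact.out : p.Prime).one_lt) (by omega)
      _ = ‖-a‖ := by rw [norm_neg, ha]
  rw [norm_eq_of_norm_add_lt_right hlt, norm_neg, ha]

end PadicInt

open PadicInt in
theorem measure_preimage_toZModPow_compLeft {p : ℕ} [Fact p.Prime] {ι : Type*} [Finite ι]
    [MeasurableSpace ℤ_[p]] [BorelSpace ℤ_[p]] (μ : Measure (ι → ℤ_[p])) [μ.IsAddLeftInvariant]
    (k : ℕ) (S : Set (ι → ZMod (p ^ k))) :
    μ ((toZModPow k).compLeft ι ⁻¹' S) = S.ncard * μ Set.univ / ((p ^ k) ^ Nat.card ι : ℕ) := by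
  have hcont : Continuous ((toZModPow k).compLeft ι : (ι → ℤ_[p]) → ι → ZMod (p ^ k)) :=
    continuous_pi fun i => (continuous_toZModPow k).comp (continuous_apply i)
  have hcard : Nat.card (ι → ZMod (p ^ k)) = (p ^ k) ^ Nat.card ι := by
    rw [Nat.card_fun, Nat.card_zmod]
  rw [← hcard]
  exact measure_preimage_eq_ncard_mul_div μ (π := ((toZModPow k).compLeft ι).toAddMonoidHom)
    (toZModPow_surjective k).comp_left
    (fun b => (hcont.isOpen_preimage _ (isOpen_discrete _)).measurableSet) S

theorem integrable_norm_eval_rpow {p : ℕ} [Fact p.Prime] {σ : Type*} [Countable σ]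
    [MeasurableSpace ℤ_[p]] [BorelSpace ℤ_[p]] (f : MvPolynomial σ ℤ_[p])
    (μ : Measure (σ → ℤ_[p])) [IsFiniteMeasure μ] {s : ℝ} (hs : 0 ≤ s) :
    Integrable (fun x => ‖eval x f‖ ^ s) μ := by
  refine .of_bound ((continuous_eval f).norm.rpow_const fun _ => .inr hs).aestronglyMeasurable 1
    (ae_of_all _ fun x => ?_)
  rw [Real.norm_of_nonneg (by positivity)]
  exact Real.rpow_le_one (norm_nonneg _) (PadicInt.norm_le_one _) hs

section LevelSets

open PadicInt

variable {p : ℕ} [Fact p.Prime] {d : ℕ} (f : MvPolynomial (Fin d) ℤ_[p])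

theorem Yset_eq_preimage_Xset (n : ℕ) :
    Yset p f n = (toZModPow (n + 1)).compLeft (Fin d) ⁻¹' Xset p f n := by
  refine (Set.subset_preimage_image _ _).antisymm ?_
  rintro x ⟨y, hy, hyx⟩
  refine norm_eq_of_toZModPow_eq n.lt_succ_self ?_ hy
  rw [map_eval, map_eval]
  exact congrArg (fun z => eval z (map _ f)) hyx

theorem iUnion_Yset : ⋃ n, Yset p f n = {x | eval x f ≠ 0} := by
  ext x
  simp only [Set.mem_iUnion, Yset, Set.mem_ofPred_eq]
  constructor
  · rintro ⟨n, hn⟩ h0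
    rw [h0, norm_zero] at hn
    exact (zpow_pos (Nat.cast_pos.mpr (Fact.out : p.Prime).pos) _).ne hn
  · exact fun h => ⟨_, norm_eq_zpow_neg_valuation h⟩

open Function in
theorem pairwise_disjoint_Yset : Pairwise (Disjoint on Yset p f) := by
  intro m n hmn
  refine Set.disjoint_left.mpr fun x hm hn => hmn ?_
  have hp : (1 : ℝ) < p := by exact_mod_cast (Fact.out : p.Prime).one_lt
  have := zpow_right_injective₀ (zero_lt_one.trans hp) hp.ne' (hm.symm.trans hn)
  omega

variable [MeasurableSpace ℤ_[p]] [BorelSpace ℤ_[p]]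

theorem measurableSet_Yset (n : ℕ) : MeasurableSet (Yset p f n) :=
  measurableSet_eq_fun (continuous_eval f).norm.measurable measurable_const

theorem setIntegral_Yset (μ : Measure (Fin d → ℤ_[p])) [μ.IsAddLeftInvariant]
    (hμ : μ Set.univ = 1) (s : ℝ) (n : ℕ) :
    ∫ x in Yset p f n, ‖eval x f‖ ^ s ∂μ =
      (Xset p f n).ncard * (p : ℝ) ^ (-((((n + 1) * d : ℕ) : ℝ) + n * s)) := by
  have hp : (0 : ℝ) < p := Nat.cast_pos.mpr (Fact.out : p.Prime).pos
  rw [setIntegral_congr_fun (measurableSet_Yset f n) fun x hx => by rw [hx],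
    setIntegral_const, measureReal_def, Yset_eq_preimage_Xset,
    measure_preimage_toZModPow_compLeft, hμ, Nat.card_fin]
  simp only [mul_one, ENNReal.toReal_div, ENNReal.toReal_natCast, smul_eq_mul]
  rw [div_eq_mul_inv, mul_assoc, neg_add, Real.rpow_add hp, Real.rpow_neg hp.le,
    Real.rpow_natCast, ← Real.rpow_intCast, ← Real.rpow_mul hp.le]
  push_cast
  rw [← pow_mul, neg_mul]

end LevelSets

theorem igusa_local_zeta_eq_tsum_general (p : ℕ) [Fact p.Prime] (d : ℕ)
    (f : MvPolynomial (Fin d) ℤ_[p]) (s : ℝ) (hs : 0 < s)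
    [MeasurableSpace ℤ_[p]] [BorelSpace ℤ_[p]]
    (μ : Measure (Fin d → ℤ_[p])) [μ.IsAddHaarMeasure] (hμ : μ Set.univ = 1) :
    Summable (fun n : ℕ =>
      ((Xset p f n).ncard : ℝ) * (p : ℝ) ^ (-((((n + 1) * d : ℕ) : ℝ) + (n : ℝ) * s))) ∧
    ∫ x, ‖MvPolynomial.eval x f‖ ^ s ∂μ =
      ∑' n : ℕ,
        ((Xset p f n).ncard : ℝ) * (p : ℝ) ^ (-((((n + 1) * d : ℕ) : ℝ) + (n : ℝ) * s)) := by
  have : IsFiniteMeasure μ := ⟨by simp [hμ]⟩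
  have hsum := hasSum_integral_iUnion (measurableSet_Yset f) (pairwise_disjoint_Yset f)
    (integrable_norm_eval_rpow f μ hs.le).integrableOn
  have hzero : ∀ x, x ∉ ⋃ n, Yset p f n → ‖eval x f‖ ^ s = 0 := fun x hx => by
    rw [iUnion_Yset, Set.notMem_ofPred_iff, not_not] at hx
    rw [hx, norm_zero, Real.zero_rpow hs.ne']
  rw [setIntegral_eq_integral_of_forall_compl_eq_zero hzero,
    funext (setIntegral_Yset f μ hμ s)] at hsum
  exact ⟨hsum.summable, hsum.tsum_eq.symm⟩

/-- Igusa's local zeta function identity: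
`∫_{ℤ_p^d} |f(x)|_p^s dμ = ∑_n card(X_{n,f}) p^{-((n+1)d + ns)}`, with convergent sum. -/
theorem igusa_local_zeta_eq_tsum (p : ℕ) [Fact p.Prime] (d : ℕ) (hd : 1 ≤ d)
    (f : MvPolynomial (Fin d) ℤ_[p]) (s : ℝ) (hs : 0 < s)
    [MeasurableSpace ℤ_[p]] [BorelSpace ℤ_[p]]
    (μ : Measure (Fin d → ℤ_[p])) [μ.IsAddHaarMeasure] (hμ : μ Set.univ = 1) :
    Summable (fun n : ℕ =>
      ((Xset p f n).ncard : ℝ) * (p : ℝ) ^ (-((((n + 1) * d : ℕ) : ℝ) + (n : ℝ) * s))) ∧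
    ∫ x, ‖MvPolynomial.eval x f‖ ^ s ∂μ =
      ∑' n : ℕ,
        ((Xset p f n).ncard : ℝ) * (p : ℝ) ^ (-((((n + 1) * d : ℕ) : ℝ) + (n : ℝ) * s)) :=
  igusa_local_zeta_eq_tsum_general p d f s hs μ hμ
end

section
/- Let κ0 ≥ 2, κg ≥ 1 and g ≥ 2 be integers with N := 2g − κg − 1 > 0, and let rational numbers N_0, N_g, ν_0, ν_g satisfy the relations κ0·N_0 = N_g, κg·N_g = N_0 + N, κ0·ν_0 = ν_g + 1 and κg·ν_g = (ν_0 − 1) + 2 − 2g. Then in the field ℚ(s) of rational functions over ℚ the elements ν_0 + s·N_0, ν_g + s·N_g, 1 + s·N and 1 − 2κ0·g + κ0(1 + s·N) are nonzero, and 1/(ν_0 + s·N_0) + 1/((ν_0 + s·N_0)(ν_g + s·N_g)) − 2g/(ν_g + s·N_g) + 1/((ν_g + s·N_g)(1 + s·N)) = (κ0·κg − 1)·(1 + (κ0 − 2g)(1 + s·N)) / ((1 − 2κ0·g + κ0(1 + s·N))·(1 + s·N)). (This is the topological zeta function z_0(ND, s) of Example 4.1.) -/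
open RatFunc

/-! Put `d = κ0 κg − 1`, the determinant of the intersection matrix of `E_0, E_g`. The relations
between the numerical data solve to `d (ν_0 + sN_0) = sN − N` and
`d (ν_g + sN_g) = 1 − 2κ0 g + κ0 (1 + sN)`, so every denominator of `z_0(ND, s)` is a nonzero
multiple of a polynomial of degree one in `s` (here `N ≠ 0` is what matters). Substituting these
expressions turns the claimed formula into a polynomial identity in `s`, `κ0`, `κg`, `g`. -/

theorem RatFunc.C_add_X_mul_C_ne_zero {K : Type*} [Field K] (a : K) {b : K} (hb : b ≠ 0) :
    C a + X * C b ≠ 0 := by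
  have hpoly : Polynomial.C b * Polynomial.X + Polynomial.C a ≠ 0 :=
    Polynomial.ne_zero_of_degree_gt (n := 0) (by rw [Polynomial.degree_linear hb]; decide)
  convert algebraMap_ne_zero hpoly using 1
  simp only [map_add, map_mul, algebraMap_C, algebraMap_X]
  ring

theorem example41_mul_det_eq {R : Type*} [CommRing R] {κ0 κg g N N0 Ng ν0 νg : R}
    (hN : N = 2 * g - κg - 1) (h1 : κ0 * N0 = Ng) (h2 : κg * Ng = N0 + N)
    (h3 : κ0 * ν0 = νg + 1) (h4 : κg * νg = (ν0 - 1) + 2 - 2 * g) (s : R) :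
    (ν0 + s * N0) * (κ0 * κg - 1) = s * N - N ∧
      (νg + s * Ng) * (κ0 * κg - 1) = 1 - 2 * κ0 * g + κ0 * (1 + s * N) :=
  ⟨by linear_combination s * κg * h1 + s * h2 + κg * h3 + h4 + hN,
    by linear_combination s * h1 + s * κ0 * h2 + h3 + κ0 * h4⟩

theorem example41_zeta_eq {F : Type*} [Field F] {κ0 κg g N s A B : F}
    (hN : N = 2 * g - κg - 1) (hd : κ0 * κg - 1 ≠ 0) (hA : A ≠ 0) (hB : B ≠ 0)
    (hT : 1 + s * N ≠ 0) (hAd : A * (κ0 * κg - 1) = s * N - N)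
    (hBd : B * (κ0 * κg - 1) = 1 - 2 * κ0 * g + κ0 * (1 + s * N)) :
    1 / A + 1 / (A * B) - 2 * g / B + 1 / (B * (1 + s * N)) =
      (κ0 * κg - 1) * (1 + (κ0 - 2 * g) * (1 + s * N)) /
        ((1 - 2 * κ0 * g + κ0 * (1 + s * N)) * (1 + s * N)) := by
  have hAN : (s - 1) * N ≠ 0 := by rw [sub_one_mul, ← hAd]; exact mul_ne_zero hA hd
  have hs : s - 1 ≠ 0 := left_ne_zero_of_mul hAN
  have hN0 : N ≠ 0 := right_ne_zero_of_mul hAN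
  -- keeps `field_simp` from renormalising this denominator into a form it cannot see is nonzero
  generalize hD : 1 - 2 * κ0 * g + κ0 * (1 + s * N) = D at hBd ⊢
  have hD0 : D ≠ 0 := hBd ▸ mul_ne_zero hB hd
  rw [eq_div_iff_mul_eq hd |>.mpr hAd, eq_div_iff_mul_eq hd |>.mpr hBd]
  field_simp
  subst hD hN
  ring

theorem topological_zeta_example41_general (κ0 κg g : ℤ) (hκ0 : 2 ≤ κ0) (hκg : 1 ≤ κg)
    (N : ℚ) (hN : N = 2 * (g : ℚ) - (κg : ℚ) - 1) (hNpos : 0 < N)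
    (N0 Ng ν0 νg : ℚ)
    (h1 : (κ0 : ℚ) * N0 = Ng) (h2 : (κg : ℚ) * Ng = N0 + N)
    (h3 : (κ0 : ℚ) * ν0 = νg + 1) (h4 : (κg : ℚ) * νg = (ν0 - 1) + 2 - 2 * (g : ℚ)) :
    (RatFunc.C ν0 + RatFunc.X * RatFunc.C N0 ≠ (0 : RatFunc ℚ)) ∧
    (RatFunc.C νg + RatFunc.X * RatFunc.C Ng ≠ (0 : RatFunc ℚ)) ∧
    (1 + RatFunc.X * RatFunc.C N ≠ (0 : RatFunc ℚ)) ∧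
    (RatFunc.C (1 - 2 * (κ0 : ℚ) * (g : ℚ)) + RatFunc.C (κ0 : ℚ) * (1 + RatFunc.X * RatFunc.C N)
      ≠ (0 : RatFunc ℚ)) ∧
    1 / (RatFunc.C ν0 + RatFunc.X * RatFunc.C N0) +
      1 / ((RatFunc.C ν0 + RatFunc.X * RatFunc.C N0) *
            (RatFunc.C νg + RatFunc.X * RatFunc.C Ng)) -
      RatFunc.C (2 * (g : ℚ)) / (RatFunc.C νg + RatFunc.X * RatFunc.C Ng) +
      1 / ((RatFunc.C νg + RatFunc.X * RatFunc.C Ng) * (1 + RatFunc.X * RatFunc.C N)) =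
    RatFunc.C ((κ0 : ℚ) * (κg : ℚ) - 1) *
        (1 + RatFunc.C ((κ0 : ℚ) - 2 * (g : ℚ)) * (1 + RatFunc.X * RatFunc.C N)) /
      ((RatFunc.C (1 - 2 * (κ0 : ℚ) * (g : ℚ)) +
          RatFunc.C (κ0 : ℚ) * (1 + RatFunc.X * RatFunc.C N)) *
        (1 + RatFunc.X * RatFunc.C N)) := by
  have hκ0' : (2 : ℚ) ≤ κ0 := by exact_mod_cast hκ0
  have hκg' : (1 : ℚ) ≤ κg := by exact_mod_cast hκg
  have hd : (κ0 : ℚ) * κg - 1 ≠ 0 := by nlinarith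
  have hN0 : N0 ≠ 0 := by rintro rfl; linarith [h1 ▸ h2]
  have hNg : Ng ≠ 0 := h1 ▸ mul_ne_zero (by linarith : (0 : ℚ) < κ0).ne' hN0
  obtain ⟨hN', h1', h2', h3', h4'⟩ : _ ∧ _ ∧ _ ∧ _ ∧ _ :=
    ⟨congrArg C hN, congrArg C h1, congrArg C h2, congrArg C h3, congrArg C h4⟩
  simp only [map_add, map_sub, map_mul, map_one, map_ofNat] at hN' h1' h2' h3' h4'
  obtain ⟨hAd, hBd⟩ := example41_mul_det_eq hN' h1' h2' h3' h4' X
  have hdC : C (κ0 : ℚ) * C (κg : ℚ) - 1 ≠ 0 := by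
    simpa only [map_sub, map_mul, map_one] using (map_ne_zero C).mpr hd
  have hA := C_add_X_mul_C_ne_zero ν0 hN0
  have hB := C_add_X_mul_C_ne_zero νg hNg
  have hT : 1 + X * C N ≠ 0 := by simpa using C_add_X_mul_C_ne_zero 1 hNpos.ne'
  refine ⟨hA, hB, hT, ?_, ?_⟩
  · simpa only [map_sub, map_mul, map_one, map_ofNat] using hBd ▸ mul_ne_zero hB hdC
  · simp only [map_sub, map_mul, map_one, map_ofNat]
    exact example41_zeta_eq hN' hdC hA hB hT hAd hBd

/-- Example 4.1: the topological zeta function `z_0(ND, s)` equals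
`(κ_0 κ_g − 1)(1 + (κ_0 − 2g)(1 + sN)) / ((1 − 2κ_0 g + κ_0(1 + sN))(1 + sN))`
in `ℚ(s)`, all the displayed denominators being nonzero. -/
theorem topological_zeta_example41 (κ0 κg g : ℤ) (hκ0 : 2 ≤ κ0) (hκg : 1 ≤ κg) (hg : 2 ≤ g)
    (N : ℚ) (hN : N = 2 * (g : ℚ) - (κg : ℚ) - 1) (hNpos : 0 < N)
    (N0 Ng ν0 νg : ℚ)
    (h1 : (κ0 : ℚ) * N0 = Ng) (h2 : (κg : ℚ) * Ng = N0 + N)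
    (h3 : (κ0 : ℚ) * ν0 = νg + 1) (h4 : (κg : ℚ) * νg = (ν0 - 1) + 2 - 2 * (g : ℚ)) :
    (RatFunc.C ν0 + RatFunc.X * RatFunc.C N0 ≠ (0 : RatFunc ℚ)) ∧
    (RatFunc.C νg + RatFunc.X * RatFunc.C Ng ≠ (0 : RatFunc ℚ)) ∧
    (1 + RatFunc.X * RatFunc.C N ≠ (0 : RatFunc ℚ)) ∧
    (RatFunc.C (1 - 2 * (κ0 : ℚ) * (g : ℚ)) + RatFunc.C (κ0 : ℚ) * (1 + RatFunc.X * RatFunc.C N)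
      ≠ (0 : RatFunc ℚ)) ∧
    1 / (RatFunc.C ν0 + RatFunc.X * RatFunc.C N0) +
      1 / ((RatFunc.C ν0 + RatFunc.X * RatFunc.C N0) *
            (RatFunc.C νg + RatFunc.X * RatFunc.C Ng)) -
      RatFunc.C (2 * (g : ℚ)) / (RatFunc.C νg + RatFunc.X * RatFunc.C Ng) +
      1 / ((RatFunc.C νg + RatFunc.X * RatFunc.C Ng) * (1 + RatFunc.X * RatFunc.C N)) =
    RatFunc.C ((κ0 : ℚ) * (κg : ℚ) - 1) *
        (1 + RatFunc.C ((κ0 : ℚ) - 2 * (g : ℚ)) * (1 + RatFunc.X * RatFunc.C N)) /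
      ((RatFunc.C (1 - 2 * (κ0 : ℚ) * (g : ℚ)) +
          RatFunc.C (κ0 : ℚ) * (1 + RatFunc.X * RatFunc.C N)) *
        (1 + RatFunc.X * RatFunc.C N)) :=
  topological_zeta_example41_general κ0 κg g hκ0 hκg N hN hNpos N0 Ng ν0 νg h1 h2 h3 h4
end

section
/- Let d ≥ 3 and a ≥ 2 be integers with (d, a) ≠ (3, 2) and (d, a) ≠ (3, 3). Set A = (1 − a)·((1 − a)^d − 1)/a + d and B = 1 − (1 − a)^d (rational numbers). Then A ≠ B and A ≠ (d + 1 − a)·B; consequently, for every positive rational N, the numerator A + sN·B of z_X(ND, s) has no root in common with the denominator ((d + 1 − a) + sN)(1 + sN) in ℚ[s], i.e. no cancellation occurs in the expression for z_X(ND, s) of Example 4.4. -/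
/-!
Multiplying by `a`, the inequalities `A ≠ B` and `A ≠ (d + 1 - a) B` become `P₁ ≠ 0` and `P₂ ≠ 0` for
the integers `P₁ = (1 - a)^d + d a - 1` and `P₂ = (1 - a)^d (1 + d a - a²) + a² - 1`.
For `d = 3` these factor as `P₁ = a² (3 - a)` and `P₂ = a² (a - 1) (a - 2) (a - 3)`, which is where the
two exceptions come from. For `d ≥ 4`, taking absolute values turns `P₁ = 0` into `(a - 1)^d = d a - 1`,
which Bernoulli's inequality rules out, and `P₂ = 0` into `(a - 1)^d |1 + d a - a²| = a² - 1`, whose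
left side is too large. A common root `s N` of numerator and denominator would be `-1` or
`-(d + 1 - a)`, forcing `A = B` or `A = (d + 1 - a) B`.
-/

section FieldIdentities

variable {K : Type*} [Field K] (d : ℕ) {a : K}

theorem example44_A_sub_B (ha : a ≠ 0) :
    (1 - a) * ((1 - a) ^ d - 1) / a + d - (1 - (1 - a) ^ d) = ((1 - a) ^ d + d * a - 1) / a := by
  field_simp
  ring

theorem example44_A_sub_mul_B (ha : a ≠ 0) :
    (1 - a) * ((1 - a) ^ d - 1) / a + d - (d + 1 - a) * (1 - (1 - a) ^ d) =
      ((1 - a) ^ d * (1 + d * a - a ^ 2) + a ^ 2 - 1) / a := by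
  field_simp
  ring

end FieldIdentities

theorem not_common_root_of_ne {K : Type*} [Field K] {A B c t : K} (h₁ : A ≠ B) (h₂ : A ≠ c * B) :
    ¬(A + t * B = 0 ∧ (c + t) * (1 + t) = 0) := by
  rintro ⟨hnum, hden⟩
  rcases mul_eq_zero.mp hden with h | h
  · exact h₂ (by linear_combination hnum - B * h)
  · exact h₁ (by linear_combination hnum - B * h)

section IntegerInequalities

variable {a : ℤ} {d : ℕ}

theorem mul_sub_one_lt_sub_one_pow (ha : 3 ≤ a) (hd : 4 ≤ d) : d * a - 1 < (a - 1) ^ d := by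
  obtain ⟨n, rfl⟩ : ∃ n, d = n + 2 := ⟨d - 2, by omega⟩
  have hn : (2 : ℤ) ≤ n := by exact_mod_cast (by omega : 2 ≤ n)
  have hbern : 1 + n * (a - 2) ≤ (a - 1) ^ n := by
    have := one_add_mul_le_pow (show -2 ≤ a - 2 by linarith) n
    rwa [show 1 + (a - 2) = a - 1 by ring] at this
  have hc : 0 ≤ a - 3 := sub_nonneg.2 ha
  have hk : 0 ≤ (n : ℤ) - 2 := sub_nonneg.2 hn
  rw [pow_add]
  push_cast
  nlinarith [mul_le_mul_of_nonneg_right hbern (sq_nonneg (a - 1)), mul_nonneg hk hc,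
    mul_nonneg (mul_nonneg hk hc) hc, mul_nonneg (mul_nonneg hc hc) hc]

theorem one_sub_pow_add_mul_sub_one_ne_zero (ha : 2 ≤ a) (hd : 3 ≤ d) (hne : ¬(d = 3 ∧ a = 3)) :
    (1 - a) ^ d + d * a - 1 ≠ 0 := by
  intro h
  rcases hd.eq_or_lt with rfl | hd4
  · have hfac : a ^ 2 * (3 - a) = 0 := by linear_combination h
    rcases mul_eq_zero.mp hfac with h0 | h3
    · nlinarith
    · exact hne ⟨rfl, by linarith⟩
  · have habs : (a - 1) ^ d = d * a - 1 := by
      have := congrArg abs (eq_sub_of_add_eq (sub_eq_zero.mp h))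
      rwa [abs_pow, abs_of_nonpos (show 1 - a ≤ 0 by linarith),
        abs_of_nonpos (show 1 - d * a ≤ 0 by nlinarith), neg_sub, neg_sub] at this
    rcases ha.eq_or_lt with rfl | ha3
    · have hd' : (4 : ℤ) ≤ d := by exact_mod_cast hd4
      norm_num at habs
      linarith
    · exact (mul_sub_one_lt_sub_one_pow ha3 hd4).ne' habs

theorem one_sub_pow_mul_add_sq_sub_one_ne_zero (ha : 2 ≤ a) (hd : 3 ≤ d)
    (hne₁ : ¬(d = 3 ∧ a = 2)) (hne₂ : ¬(d = 3 ∧ a = 3)) :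
    (1 - a) ^ d * (1 + d * a - a ^ 2) + a ^ 2 - 1 ≠ 0 := by
  intro h
  rcases hd.eq_or_lt with rfl | hd4
  · have hfac : a ^ 2 * (a - 1) * ((a - 2) * (a - 3)) = 0 := by linear_combination h
    rcases mul_eq_zero.mp hfac with h0 | h23
    · rcases mul_eq_zero.mp h0 with h0 | h1 <;> nlinarith
    · rcases mul_eq_zero.mp h23 with h2 | h3
      · exact hne₁ ⟨rfl, by linarith⟩
      · exact hne₂ ⟨rfl, by linarith⟩
  · set C : ℤ := 1 + d * a - a ^ 2
    have hC : C ≠ 0 := by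
      rintro hC
      rw [hC] at h
      nlinarith
    have habs : (a - 1) ^ d * |C| = a ^ 2 - 1 := by
      have := congrArg abs (eq_sub_of_add_eq (sub_eq_zero.mp h))
      rwa [abs_mul, abs_pow, abs_of_nonpos (show 1 - a ≤ 0 by linarith),
        abs_of_nonpos (show 1 - a ^ 2 ≤ 0 by nlinarith), neg_sub, neg_sub] at this
    rcases ha.eq_or_lt with rfl | ha3
    · have hd' : (4 : ℤ) ≤ d := by exact_mod_cast hd4
      rw [abs_of_pos (by simp only [C]; linarith)] at habs
      norm_num [C] at habs
      linarith
    · have hle : (a - 1) ^ 4 ≤ a ^ 2 - 1 :=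
        calc (a - 1) ^ 4 = (a - 1) ^ 4 * 1 := (mul_one _).symm
          _ ≤ (a - 1) ^ d * |C| :=
            mul_le_mul (pow_le_pow_right₀ (by linarith) hd4) (Int.one_le_abs hC) zero_le_one
              (pow_nonneg (by linarith) d)
          _ = a ^ 2 - 1 := habs
      have hc : 0 ≤ a - 3 := by linarith
      nlinarith [mul_nonneg (mul_nonneg hc hc) hc]

end IntegerInequalities

/-- Example 4.4: for `(d, a)` different from `(3, 2)` and `(3, 3)` there is no cancellation
in the expression for `z_X(ND, s)`: with `A = (1−a)((1−a)^d − 1)/a + d` and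
`B = 1 − (1−a)^d` one has `A ≠ B` and `A ≠ (d+1−a)B`, so for any positive rational `N` the
numerator `A + sN·B` has no common root with the denominator `(d+1−a+sN)(1+sN)`. -/
theorem no_cancellation_example44 (d a : ℕ) (hd : 3 ≤ d) (ha : 2 ≤ a)
    (hne1 : ¬(d = 3 ∧ a = 2)) (hne2 : ¬(d = 3 ∧ a = 3)) :
    let A : ℚ := (1 - (a : ℚ)) * ((1 - (a : ℚ)) ^ d - 1) / (a : ℚ) + (d : ℚ)
    let B : ℚ := 1 - (1 - (a : ℚ)) ^ d
    A ≠ B ∧ A ≠ ((d : ℚ) + 1 - (a : ℚ)) * B ∧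
      ∀ N : ℚ, 0 < N → ∀ r : ℚ,
        ¬(A + r * N * B = 0 ∧ (((d : ℚ) + 1 - (a : ℚ)) + r * N) * (1 + r * N) = 0) := by
  intro A B
  have ha₀ : (a : ℚ) ≠ 0 := by positivity
  have ha' : (2 : ℤ) ≤ a := by exact_mod_cast ha
  have hP₁ : (1 - (a : ℚ)) ^ d + d * a - 1 ≠ 0 := by
    exact_mod_cast one_sub_pow_add_mul_sub_one_ne_zero ha' hd (by exact_mod_cast hne2)
  have hP₂ : (1 - (a : ℚ)) ^ d * (1 + d * a - a ^ 2) + a ^ 2 - 1 ≠ 0 := by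
    exact_mod_cast one_sub_pow_mul_add_sq_sub_one_ne_zero ha' hd (by exact_mod_cast hne1)
      (by exact_mod_cast hne2)
  have hAB : A ≠ B := sub_ne_zero.mp <| by
    rw [example44_A_sub_B d ha₀]
    exact div_ne_zero hP₁ ha₀
  have hAcB : A ≠ ((d : ℚ) + 1 - a) * B := sub_ne_zero.mp <| by
    rw [example44_A_sub_mul_B d ha₀]
    exact div_ne_zero hP₂ ha₀
  exact ⟨hAB, hAcB, fun N _ r => not_common_root_of_ne hAB hAcB⟩
end
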